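/- arXiv:1608.08490 — 3 statements merged into one kernel-verified Lean document; each statement's English description precedes it below -/
import Mathlib

section
/- For c < 0 and a random variable Y with continuous CDF, the CPT value satisfies U(cY) = (-c)^{\alpha} U(-Y). -/
open MeasureTheory Set

/-- Cumulative distribution function of a random variable `X` under `μ`. -/
noncomputable def cdf {Ω : Type*} [MeasurableSpace Ω] (μ : Measure Ω) (X : Ω → ℝ) (x : ℝ) : ℝ :=
  (μ {ω | X ω ≤ x}).toReal

/-- The CPT functional. -/
noncomputable def cptU {Ω : Type*} [MeasurableSpace Ω] (μ : Measure Ω)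
    (Tp Tm : ℝ → ℝ) (α lam : ℝ) (X : Ω → ℝ) : ℝ :=
  (∫ x in Ioi (0:ℝ), Tp (1 - cdf μ X x) * (α * x ^ (α - 1))) -
  ∫ x in Ioi (0:ℝ), Tm (cdf μ X (-x)) * (lam * (α * x ^ (α - 1)))

/-! Since `c * Y = (-c) * (-Y)` with `-c > 0`, the distribution function of `c * Y` is that of
`-Y` evaluated at `x / (-c)`. Substituting `x = (-c) y` in both integrals of `U`, the weight
`x ^ (α - 1) dx` is homogeneous of degree `α`, which produces the factor `(-c) ^ α`. -/

lemma cdf_const_mul {Ω : Type*} [MeasurableSpace Ω] (μ : Measure Ω) (Z : Ω → ℝ)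
    {k : ℝ} (hk : 0 < k) (x : ℝ) :
    cdf μ (fun ω => k * Z ω) x = cdf μ Z (x / k) := by
  simp only [cdf, le_div_iff₀ hk, mul_comm]

lemma setIntegral_Ioi_comp_div_mul_of_homogeneous (f w : ℝ → ℝ) {k b : ℝ} (hk : 0 < k)
    (hw : ∀ x, 0 < x → w (k * x) = k ^ b * w x) :
    ∫ x in Ioi (0:ℝ), f (x / k) * w x = k ^ (b + 1) * ∫ x in Ioi (0:ℝ), f x * w x := by
  have hsubst := integral_comp_mul_left_Ioi (fun x => f (x / k) * w x) 0 hk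
  rw [mul_zero] at hsubst
  have hscaled : ∫ x in Ioi (0:ℝ), f (k * x / k) * w (k * x) =
      ∫ x in Ioi (0:ℝ), k ^ b * (f x * w x) := by
    refine setIntegral_congr_fun measurableSet_Ioi fun x hx => ?_
    rw [mul_div_cancel_left₀ _ hk.ne', hw x hx, mul_left_comm]
  rw [hscaled, integral_const_mul, smul_eq_mul] at hsubst
  rw [Real.rpow_add_one hk.ne', mul_right_comm, hsubst, mul_comm, mul_inv_cancel_left₀ hk.ne']

lemma const_mul_rpow_homogeneous (a β : ℝ) {k : ℝ} (hk : 0 < k) (x : ℝ) (hx : 0 < x) :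
    a * (k * x) ^ β = k ^ β * (a * x ^ β) := by
  rw [Real.mul_rpow hk.le hx.le]
  ring

theorem cptU_smul_neg_general {Ω : Type*} [MeasurableSpace Ω] (μ : Measure Ω)
    (Tp Tm : ℝ → ℝ) (α lam : ℝ)
    (Y : Ω → ℝ) (c : ℝ) (hc : c < 0) :
    cptU μ Tp Tm α lam (fun ω => c * Y ω) = (-c) ^ α * cptU μ Tp Tm α lam (fun ω => -Y ω) := by
  have hk : 0 < -c := neg_pos.mpr hc
  have hcdf : ∀ x, cdf μ (fun ω => c * Y ω) x = cdf μ (fun ω => -Y ω) (x / -c) := fun x => by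
    simpa only [neg_mul_neg] using cdf_const_mul μ (fun ω => -Y ω) hk x
  have hw : ∀ x, 0 < x → α * (-c * x) ^ (α - 1) = (-c) ^ (α - 1) * (α * x ^ (α - 1)) :=
    const_mul_rpow_homogeneous α (α - 1) hk
  have hw' : ∀ x, 0 < x →
      lam * (α * (-c * x) ^ (α - 1)) = (-c) ^ (α - 1) * (lam * (α * x ^ (α - 1))) :=
    fun x hx => by rw [hw x hx, mul_left_comm]
  simp only [cptU, hcdf, neg_div]
  rw [setIntegral_Ioi_comp_div_mul_of_homogeneous (fun y => Tp (1 - cdf μ (fun ω => -Y ω) y))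
      (fun x => α * x ^ (α - 1)) hk hw,
    setIntegral_Ioi_comp_div_mul_of_homogeneous (fun y => Tm (cdf μ (fun ω => -Y ω) (-y)))
      (fun x => lam * (α * x ^ (α - 1))) hk hw', sub_add_cancel, mul_sub]

/-- For `c < 0` and `Y` with continuous CDF, `U(cY) = (-c)^α U(-Y)`. -/
theorem cptU_smul_neg {Ω : Type*} [MeasurableSpace Ω] (μ : Measure Ω)
    [IsProbabilityMeasure μ] (Tp Tm : ℝ → ℝ) (α lam : ℝ)
    (hα : 0 < α) (hα1 : α < 1) (hlam : 1 < lam)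
    (hT0p : Tp 0 = 0) (hT1p : Tp 1 = 1) (hT0m : Tm 0 = 0) (hT1m : Tm 1 = 1)
    (Y : Ω → ℝ) (hcont : Continuous (cdf μ Y)) (c : ℝ) (hc : c < 0)
    (h1 : IntegrableOn (fun x => Tp (1 - cdf μ (fun ω => -Y ω) x) * (α * x ^ (α - 1))) (Ioi 0))
    (h2 : IntegrableOn
      (fun x => Tm (cdf μ (fun ω => -Y ω) (-x)) * (lam * (α * x ^ (α - 1)))) (Ioi 0))
    (h3 : IntegrableOn
      (fun x => Tp (1 - cdf μ (fun ω => c * Y ω) x) * (α * x ^ (α - 1))) (Ioi 0))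
    (h4 : IntegrableOn
      (fun x => Tm (cdf μ (fun ω => c * Y ω) (-x)) * (lam * (α * x ^ (α - 1)))) (Ioi 0)) :
    cptU μ Tp Tm α lam (fun ω => c * Y ω) = (-c) ^ α * cptU μ Tp Tm α lam (fun ω => -Y ω) :=
  cptU_smul_neg_general μ Tp Tm α lam Y c hc
end

section
/- Single-period optimal value (Proposition 1): with admissible set A|W| \le v \le B|W| (A \le 0 < B) and terminal benchmarked wealth v\,y, the maximal CPT value equals W^{\alpha} A_* if W \ge 0 and -(-W)^{\alpha} B_* if W < 0, where A_* = \max_{z \in [A,B]} g(z), B_* = -\max_{z \in [-B,-A]} l(z), with g(z) = z^{\alpha} k \cdot 1_{z \in [0,B]} + (-z)^{\alpha} h \cdot 1_{z \in [A,0]}, l(z) = (-z)^{\alpha} k \cdot 1_{z \in [-B,0]} + z^{\alpha} h \cdot 1_{z \in [0,-A]}, k = U(y), h = U(-y). -/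
open MeasureTheory Set

/-- `g(z) = z^α k 1_{z∈[0,B]} + (-z)^α h 1_{z∈[A,0]}`. -/
noncomputable def gfun (α k h A B : ℝ) (z : ℝ) : ℝ :=
  (if z ∈ Icc (0:ℝ) B then z ^ α * k else 0) + (if z ∈ Icc A 0 then (-z) ^ α * h else 0)

/-- `l(z) = (-z)^α k 1_{z∈[-B,0]} + z^α h 1_{z∈[0,-A]}`. -/
noncomputable def lfun (α k h A B : ℝ) (z : ℝ) : ℝ :=
  (if z ∈ Icc (-B) (0:ℝ) then (-z) ^ α * k else 0) + (if z ∈ Icc 0 (-A) then z ^ α * h else 0)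

/-!
The CPT functional is positively homogeneous of degree `α`: the distribution function of `c X`
at `x` is that of `X` at `x / c`, and the substitution `x ↦ c x` in both integrals pulls out
`c ^ α`. Hence `U (v y) = (v⁺) ^ α U(y) + (v⁻) ^ α U(-y)`, and writing an admissible position as
`v = c |W|` with `c ∈ [A, B]` gives `U (v y) = |W| ^ α g(c)`, where the continuous `g` attains its
maximum on `[A, B]`. For `W < 0` the claimed value is the same number because `l(z) = g(-z)`.
-/

section Homogeneity

variable {Ω : Type*} [MeasurableSpace Ω] (μ : Measure Ω) (Tp Tm : ℝ → ℝ) (α lam : ℝ)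

lemma cdf_const_mul_s7 (X : Ω → ℝ) {c : ℝ} (hc : 0 < c) (x : ℝ) :
    cdf μ (fun ω => c * X ω) x = cdf μ X (c⁻¹ * x) := by
  simp only [cdf, le_inv_mul_iff₀ hc]

lemma setIntegral_Ioi_comp_inv_mul_mul_rpow (φ : ℝ → ℝ) {c : ℝ} (hc : 0 < c) :
    ∫ x in Ioi (0 : ℝ), φ (c⁻¹ * x) * x ^ (α - 1)
      = c ^ α * ∫ t in Ioi (0 : ℝ), φ t * t ^ (α - 1) := by
  have hsubst := integral_comp_mul_left_Ioi (fun x => φ (c⁻¹ * x) * x ^ (α - 1)) 0 hc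
  have hscaled : ∀ t ∈ Ioi (0 : ℝ),
      φ (c⁻¹ * (c * t)) * (c * t) ^ (α - 1) = c ^ (α - 1) * (φ t * t ^ (α - 1)) := by
    intro t ht
    rw [inv_mul_cancel_left₀ hc.ne', Real.mul_rpow hc.le (le_of_lt ht)]
    ring
  rw [mul_zero, setIntegral_congr_fun measurableSet_Ioi hscaled, integral_const_mul,
    smul_eq_mul, Real.rpow_sub_one hc.ne'] at hsubst
  field_simp at hsubst ⊢
  linarith

lemma cptU_eq (X : Ω → ℝ) :
    cptU μ Tp Tm α lam X
      = α * (∫ x in Ioi (0 : ℝ), Tp (1 - cdf μ X x) * x ^ (α - 1))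
        - lam * α * ∫ x in Ioi (0 : ℝ), Tm (cdf μ X (-x)) * x ^ (α - 1) := by
  rw [cptU, ← integral_const_mul, ← integral_const_mul]
  congr 1 <;> congr 1 <;> funext x <;> ring

lemma cptU_const_mul (X : Ω → ℝ) {c : ℝ} (hc : 0 < c) :
    cptU μ Tp Tm α lam (fun ω => c * X ω) = c ^ α * cptU μ Tp Tm α lam X := by
  have hgain := setIntegral_Ioi_comp_inv_mul_mul_rpow α (fun t => Tp (1 - cdf μ X t)) hc
  have hloss := setIntegral_Ioi_comp_inv_mul_mul_rpow α (fun t => Tm (cdf μ X (-t))) hc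
  simp only [cptU_eq, cdf_const_mul_s7 μ X hc, mul_neg] at hgain hloss ⊢
  rw [hgain, hloss]
  ring

lemma cptU_const_zero [IsProbabilityMeasure μ] (hT0p : Tp 0 = 0) (hT0m : Tm 0 = 0) :
    cptU μ Tp Tm α lam (fun _ => 0) = 0 := by
  have hcdf (x : ℝ) : cdf μ (fun _ => (0 : ℝ)) x = if 0 ≤ x then 1 else 0 := by
    split_ifs with hx <;> simp [cdf, hx]
  have hgain : ∀ x ∈ Ioi (0 : ℝ), Tp (1 - cdf μ (fun _ => 0) x) * x ^ (α - 1) = 0 := by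
    intro x hx
    rw [hcdf, if_pos (le_of_lt hx), sub_self, hT0p, zero_mul]
  have hloss : ∀ x ∈ Ioi (0 : ℝ), Tm (cdf μ (fun _ => 0) (-x)) * x ^ (α - 1) = 0 := by
    intro x hx
    rw [hcdf, if_neg (not_le.2 (neg_neg_of_pos hx)), hT0m, zero_mul]
  rw [cptU_eq, setIntegral_congr_fun measurableSet_Ioi hgain,
    setIntegral_congr_fun measurableSet_Ioi hloss]
  simp

lemma cptU_mul [IsProbabilityMeasure μ] (hα : α ≠ 0) (hT0p : Tp 0 = 0) (hT0m : Tm 0 = 0)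
    (X : Ω → ℝ) (v : ℝ) :
    cptU μ Tp Tm α lam (fun ω => v * X ω)
      = max v 0 ^ α * cptU μ Tp Tm α lam X
        + max (-v) 0 ^ α * cptU μ Tp Tm α lam (fun ω => -X ω) := by
  rcases lt_trichotomy v 0 with hv | rfl | hv
  · have hflip : (fun ω => v * X ω) = fun ω => -v * -X ω := by
      funext ω
      ring
    rw [hflip, cptU_const_mul μ Tp Tm α lam _ (neg_pos.2 hv), max_eq_right hv.le,
      max_eq_left (neg_nonneg.2 hv.le), Real.zero_rpow hα]
    ring
  · simp only [zero_mul, cptU_const_zero μ Tp Tm α lam hT0p hT0m, neg_zero, max_self,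
      Real.zero_rpow hα]
    ring
  · rw [cptU_const_mul μ Tp Tm α lam _ hv, max_eq_left hv.le,
      max_eq_right (neg_nonpos.2 hv.le), Real.zero_rpow hα]
    ring

end Homogeneity

section Envelope

variable (α k h A B : ℝ)

lemma lfun_eq_gfun_neg (z : ℝ) : lfun α k h A B z = gfun α k h A B (-z) := by
  simp only [lfun, gfun, neg_neg, mem_Icc, neg_nonneg, neg_le, neg_nonpos, le_neg, and_comm]

lemma lfun_image_Icc : lfun α k h A B '' Icc (-B) (-A) = gfun α k h A B '' Icc A B := by
  rw [show lfun α k h A B = gfun α k h A B ∘ Neg.neg from funext (lfun_eq_gfun_neg α k h A B),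
    image_comp, image_neg_eq_neg, neg_Icc, neg_neg, neg_neg]

lemma gfun_eqOn_Icc (hα : α ≠ 0) :
    EqOn (gfun α k h A B) (fun z => max z 0 ^ α * k + max (-z) 0 ^ α * h) (Icc A B) := by
  intro z hz
  rcases lt_trichotomy z 0 with hz0 | rfl | hz0
  · simp [gfun, hz.1, hz0.le, not_le.2 hz0, Real.zero_rpow hα]
  · simp [gfun, hz.1, hz.2]
  · simp [gfun, hz.2, hz0.le, not_le.2 hz0, Real.zero_rpow hα]

lemma continuousOn_gfun (hα : 0 < α) : ContinuousOn (gfun α k h A B) (Icc A B) := by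
  refine Continuous.continuousOn ?_ |>.congr (gfun_eqOn_Icc α k h A B hα.ne')
  exact ((continuous_id.max continuous_const).rpow_const fun _ => Or.inr hα.le).mul
      continuous_const |>.add <|
    ((continuous_neg.max continuous_const).rpow_const fun _ => Or.inr hα.le).mul
      continuous_const

lemma isGreatest_sSup_gfun_image (hα : 0 < α) (hAB : A ≤ B) :
    IsGreatest (gfun α k h A B '' Icc A B) (sSup (gfun α k h A B '' Icc A B)) :=
  (isCompact_Icc.image_of_continuousOn (continuousOn_gfun α k h A B hα)).isGreatest_sSup
    ((nonempty_Icc.2 hAB).image _)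

end Envelope

lemma cptU_mul_mul_eq_rpow_mul_gfun {Ω : Type*} [MeasurableSpace Ω] (μ : Measure Ω)
    [IsProbabilityMeasure μ] (Tp Tm : ℝ → ℝ) (α lam : ℝ) (hα : α ≠ 0)
    (hT0p : Tp 0 = 0) (hT0m : Tm 0 = 0) (y : Ω → ℝ) {A B c w : ℝ} (hc : c ∈ Icc A B)
    (hw : 0 ≤ w) :
    cptU μ Tp Tm α lam (fun ω => c * w * y ω)
      = w ^ α * gfun α (cptU μ Tp Tm α lam y) (cptU μ Tp Tm α lam (fun ω => -y ω)) A B c := by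
  have hpos : max (c * w) 0 = max c 0 * w := by rw [max_mul_of_nonneg _ _ hw, zero_mul]
  have hneg : max (-(c * w)) 0 = max (-c) 0 * w := by
    rw [max_mul_of_nonneg _ _ hw, zero_mul, neg_mul]
  rw [cptU_mul μ Tp Tm α lam hα hT0p hT0m, gfun_eqOn_Icc α _ _ A B hα hc, hpos, hneg,
    Real.mul_rpow (le_max_right _ _) hw, Real.mul_rpow (le_max_right _ _) hw]
  ring

theorem single_period_optimal_value_general {Ω : Type*} [MeasurableSpace Ω] (μ : Measure Ω)
    [IsProbabilityMeasure μ] (Tp Tm : ℝ → ℝ) (α lam : ℝ)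
    (hα : 0 < α)
    (hT0p : Tp 0 = 0) (hT0m : Tm 0 = 0)
    (y : Ω → ℝ)
    (A B W : ℝ) (hA : A ≤ 0) (hB : 0 < B) :
    IsGreatest
      {u : ℝ | ∃ v : ℝ, A * |W| ≤ v ∧ v ≤ B * |W| ∧ u = cptU μ Tp Tm α lam (fun ω => v * y ω)}
      (if 0 ≤ W then
          W ^ α * sSup (gfun α (cptU μ Tp Tm α lam y) (cptU μ Tp Tm α lam (fun ω => -y ω)) A B ''
            Icc A B)
        else
          -((-W) ^ α *
            -sSup (lfun α (cptU μ Tp Tm α lam y) (cptU μ Tp Tm α lam (fun ω => -y ω)) A B ''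
              Icc (-B) (-A)))) := by
  set G := gfun α (cptU μ Tp Tm α lam y) (cptU μ Tp Tm α lam (fun ω => -y ω)) A B
  have hAB : A ≤ B := hA.trans hB.le
  have hvalues : {u : ℝ | ∃ v : ℝ, A * |W| ≤ v ∧ v ≤ B * |W| ∧
      u = cptU μ Tp Tm α lam (fun ω => v * y ω)} = (|W| ^ α * ·) '' (G '' Icc A B) := by
    calc _ = (fun v => cptU μ Tp Tm α lam (fun ω => v * y ω)) '' Icc (A * |W|) (B * |W|) := by
          ext u
          simp only [mem_ofPred_eq, mem_image, mem_Icc, and_assoc, eq_comm]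
      _ = (fun c => cptU μ Tp Tm α lam (fun ω => c * |W| * y ω)) '' Icc A B := by
          rw [← image_mul_right_Icc hAB (abs_nonneg W), image_image]
      _ = (fun c => |W| ^ α * G c) '' Icc A B := image_congr fun c hc =>
          cptU_mul_mul_eq_rpow_mul_gfun μ Tp Tm α lam hα.ne' hT0p hT0m y hc (abs_nonneg W)
      _ = _ := (image_image _ _ _).symm
  have hoptimum : (if 0 ≤ W then W ^ α * sSup (G '' Icc A B) else
      -((-W) ^ α * -sSup (lfun α (cptU μ Tp Tm α lam y) (cptU μ Tp Tm α lam (fun ω => -y ω)) A B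
        '' Icc (-B) (-A)))) = |W| ^ α * sSup (G '' Icc A B) := by
    split_ifs with hW
    · rw [abs_of_nonneg hW]
    · rw [lfun_image_Icc, mul_neg, neg_neg, abs_of_neg (not_le.1 hW)]
  rw [hvalues, hoptimum]
  exact (monotone_mul_left_of_nonneg (by positivity)).map_isGreatest
    (isGreatest_sSup_gfun_image α _ _ A B hα hAB)

/-- Single-period optimal CPT value (Proposition 1): the maximal CPT value over admissible
strategies `A|W| ≤ v ≤ B|W|` equals `W^α A_*` if `W ≥ 0` and `-(-W)^α B_*` if `W < 0`,
where `A_* = max g` on `[A,B]` and `B_* = - max l` on `[-B,-A]`, `k = U(y)`, `h = U(-y)`. -/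
theorem single_period_optimal_value {Ω : Type*} [MeasurableSpace Ω] (μ : Measure Ω)
    [IsProbabilityMeasure μ] (Tp Tm : ℝ → ℝ) (α lam : ℝ)
    (hα : 0 < α) (hα1 : α < 1) (hlam : 1 < lam)
    (hT0p : Tp 0 = 0) (hT1p : Tp 1 = 1) (hT0m : Tm 0 = 0) (hT1m : Tm 1 = 1)
    (y : Ω → ℝ) (hmeas : Measurable y) (hcont : Continuous (cdf μ y))
    (hint1 : ∀ v : ℝ, IntegrableOn
      (fun x => Tp (1 - cdf μ (fun ω => v * y ω) x) * (α * x ^ (α - 1))) (Ioi 0))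
    (hint2 : ∀ v : ℝ, IntegrableOn
      (fun x => Tm (cdf μ (fun ω => v * y ω) (-x)) * (lam * (α * x ^ (α - 1)))) (Ioi 0))
    (A B W : ℝ) (hA : A ≤ 0) (hB : 0 < B) :
    IsGreatest
      {u : ℝ | ∃ v : ℝ, A * |W| ≤ v ∧ v ≤ B * |W| ∧ u = cptU μ Tp Tm α lam (fun ω => v * y ω)}
      (if 0 ≤ W then
          W ^ α * sSup (gfun α (cptU μ Tp Tm α lam y) (cptU μ Tp Tm α lam (fun ω => -y ω)) A B ''
            Icc A B)
        else
          -((-W) ^ α *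
            -sSup (lfun α (cptU μ Tp Tm α lam y) (cptU μ Tp Tm α lam (fun ω => -y ω)) A B ''
              Icc (-B) (-A)))) :=
  single_period_optimal_value_general μ Tp Tm α lam hα hT0p hT0m y A B W hA hB
end

section
/- Two-period backward recursion (Proposition for T-2): assuming the time-(T-1) optimal value is A_{T-1} W^{\alpha} 1_{W \ge 0} - B_{T-1}(-W)^{\alpha} 1_{W < 0}, the time-(T-2) optimal CPT value equals A_{T-2} W_{T-2}^{\alpha} 1_{W_{T-2} \ge 0} - B_{T-2}(-W_{T-2})^{\alpha} 1_{W_{T-2} < 0}, where A_{T-2} = \max_{z \in [A,B]} g_{T-2}(z), B_{T-2} = -\max_{z \in [-B,-A]} l_{T-2}(z), with g_{T-2}(z) = E[A_{T-1}(1+r+yz)^{\alpha} 1_{1+r+yz \ge 0} - B_{T-1}(-(1+r+yz))^{\alpha} 1_{1+r+yz < 0}] and l_{T-2}(z) = E[A_{T-1}(-(1+r+yz))^{\alpha} 1_{1+r+yz < 0} - B_{T-1}(1+r+yz)^{\alpha} 1_{1+r+yz \ge 0}]. -/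
open MeasureTheory Set

/-!
The value function `V` is positively homogeneous of degree `α`, and `V(c w) = (-c)^α Ṽ(w)` for
`c < 0`. Writing an admissible position as `v = z W`, the terminal wealth is
`W (1 + r + y z)`, so the expected value of `v` is `|W|^α E[V(1 + r + y z)]` for `W > 0` and
`|W|^α E[Ṽ(1 + r + y z)]` for `W < 0`, where `z` ranges over `[A, B]`, resp. `[-B, -A]`.
The growth bound `|V w| ≤ C |w|^α` together with integrability of `|y|^α` makes
`z ↦ E[V(1 + r + y z)]` continuous by dominated convergence, so its supremum over the compact
interval is attained.
-/

/-- The value function `V(w) = A₁ w^α 1_{w≥0} - B₁ (-w)^α 1_{w<0}`. -/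
noncomputable def Vfun (α a b w : ℝ) : ℝ :=
  if 0 ≤ w then a * w ^ α else -b * (-w) ^ α

/-- The reflected value function `Ṽ(w) = A₁ (-w)^α 1_{w<0} - B₁ w^α 1_{w≥0}`. -/
noncomputable def Vtfun (α a b w : ℝ) : ℝ :=
  if 0 ≤ w then -b * w ^ α else a * (-w) ^ α

theorem Real.abs_add_rpow_le {p : ℝ} (hp : 0 ≤ p) (x y : ℝ) :
    |x + y| ^ p ≤ 2 ^ p * (|x| ^ p + |y| ^ p) := by
  have hmax : |x + y| ≤ 2 * max |x| |y| := by
    linarith [abs_add_le x y, le_max_left |x| |y|, le_max_right |x| |y|]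
  calc |x + y| ^ p ≤ (2 * max |x| |y|) ^ p := by gcongr
    _ = 2 ^ p * max (|x| ^ p) (|y| ^ p) := by
      rw [Real.mul_rpow zero_le_two (by positivity), Real.rpow_max (abs_nonneg x) (abs_nonneg y) hp]
    _ ≤ 2 ^ p * (|x| ^ p + |y| ^ p) := by
      gcongr; exact max_le_add_of_nonneg (by positivity) (by positivity)

theorem Set.image_mul_right_Icc_of_neg {a b c : ℝ} (hab : a ≤ b) (hc : c < 0) :
    (· * c) '' Icc a b = Icc (b * c) (a * c) := by
  have hcomp : (· * c) = (· * -c) ∘ Neg.neg := by funext x; simp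
  rw [hcomp, image_comp, image_neg_Icc, image_mul_right_Icc (neg_le_neg hab) (by linarith),
    neg_mul_neg, neg_mul_neg]

theorem Set.setOf_exists_Icc_eq_image (F : ℝ → ℝ) (a b : ℝ) :
    {u | ∃ v, a ≤ v ∧ v ≤ b ∧ u = F v} = F '' Icc a b := by
  ext u
  simp [eq_comm, and_assoc]

theorem isGreatest_image_mul_const_sSup {s : Set ℝ} {G : ℝ → ℝ} (hs : IsCompact s)
    (hne : s.Nonempty) (hG : ContinuousOn G s) {c : ℝ} (hc : 0 ≤ c) :
    IsGreatest ((fun z => G z * c) '' s) (sSup (G '' s) * c) := by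
  have hmax := (hs.image_of_continuousOn hG).isGreatest_sSup (hne.image G)
  simpa only [image_image] using (monotone_mul_right_of_nonneg hc).map_isGreatest hmax

theorem continuousOn_integral_comp_add_mul {Ω : Type*} [MeasurableSpace Ω] {μ : Measure Ω}
    [IsFiniteMeasure μ] {y : Ω → ℝ} {V : ℝ → ℝ} {α C : ℝ} (hα : 0 ≤ α) (hy : Measurable y)
    (hint : Integrable (fun ω => |y ω| ^ α) μ) (hV : Continuous V)
    (hVC : ∀ w, |V w| ≤ C * |w| ^ α) (x a b : ℝ) :
    ContinuousOn (fun z => ∫ ω, V (x + y ω * z) ∂μ) (Icc a b) := by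
  have hC : 0 ≤ C := by simpa using (abs_nonneg _).trans (hVC 1)
  set M := max |a| |b|
  refine continuousOn_of_dominated
    (bound := fun ω => C * (2 ^ α * (|x| ^ α + |y ω| ^ α * M ^ α))) ?_ ?_ ?_ ?_
  · intro z _
    exact (hV.measurable.comp (measurable_const.add (hy.mul_const z))).aestronglyMeasurable
  · intro z hz
    refine Filter.Eventually.of_forall fun ω => ?_
    have hzM : |z| ≤ M := abs_le_max_abs_abs hz.1 hz.2
    calc ‖V (x + y ω * z)‖ ≤ C * |x + y ω * z| ^ α := hVC _
      _ ≤ C * (2 ^ α * (|x| ^ α + |y ω * z| ^ α)) := by gcongr; exact Real.abs_add_rpow_le hα _ _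
      _ ≤ C * (2 ^ α * (|x| ^ α + |y ω| ^ α * M ^ α)) := by
        rw [abs_mul, Real.mul_rpow (abs_nonneg _) (abs_nonneg _)]; gcongr
  · exact (((integrable_const _).add (hint.mul_const _)).const_mul _).const_mul _
  · exact Filter.Eventually.of_forall fun ω =>
      (hV.comp (continuous_const.add (continuous_const.mul continuous_id))).continuousOn

section ValueFunction

variable {α a b : ℝ}

theorem Vfun_eq_sub (hα : 0 < α) (w : ℝ) :
    Vfun α a b w = a * max w 0 ^ α - b * max (-w) 0 ^ α := by
  unfold Vfun
  rcases le_or_gt 0 w with h | h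
  · rw [if_pos h, max_eq_left h, max_eq_right (by linarith), Real.zero_rpow hα.ne']
    ring
  · rw [if_neg h.not_ge, max_eq_right h.le, max_eq_left (by linarith), Real.zero_rpow hα.ne']
    ring

theorem Vfun_neg (hα : 0 < α) (w : ℝ) : Vfun α a b (-w) = Vtfun α a b w := by
  rw [Vfun_eq_sub hα, neg_neg]
  unfold Vtfun
  rcases le_or_gt 0 w with h | h
  · rw [if_pos h, max_eq_left h, max_eq_right (by linarith), Real.zero_rpow hα.ne']
    ring
  · rw [if_neg h.not_ge, max_eq_right h.le, max_eq_left (by linarith), Real.zero_rpow hα.ne']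
    ring

theorem Vfun_zero (hα : α ≠ 0) : Vfun α a b 0 = 0 := by
  simp [Vfun, Real.zero_rpow hα]

theorem continuous_Vfun (hα : 0 < α) : Continuous (Vfun α a b) := by
  simp_rw [funext (Vfun_eq_sub hα)]
  fun_prop (disch := exact hα.le)

theorem continuous_Vtfun (hα : 0 < α) : Continuous (Vtfun α a b) := by
  simp_rw [← funext (Vfun_neg hα)]
  exact (continuous_Vfun hα).comp continuous_neg

theorem Vfun_mul_of_pos (hα : 0 < α) {c : ℝ} (hc : 0 < c) (w : ℝ) :
    Vfun α a b (c * w) = c ^ α * Vfun α a b w := by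
  have hmax (t : ℝ) : max (c * t) 0 = c * max t 0 := by
    rw [mul_max_of_nonneg _ _ hc.le, mul_zero]
  rw [Vfun_eq_sub hα, Vfun_eq_sub hα, ← mul_neg, hmax, hmax,
    Real.mul_rpow hc.le (le_max_right _ _), Real.mul_rpow hc.le (le_max_right _ _)]
  ring

theorem Vfun_mul_of_neg (hα : 0 < α) {c : ℝ} (hc : c < 0) (w : ℝ) :
    Vfun α a b (c * w) = (-c) ^ α * Vtfun α a b w := by
  rw [← neg_mul_neg, Vfun_mul_of_pos hα (neg_pos.2 hc), Vfun_neg hα]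

theorem abs_Vfun_le (hα : 0 < α) (w : ℝ) : |Vfun α a b w| ≤ (|a| + |b|) * |w| ^ α := by
  have hpos : max w 0 ^ α ≤ |w| ^ α := by gcongr; exact max_le (le_abs_self w) (abs_nonneg w)
  have hneg : max (-w) 0 ^ α ≤ |w| ^ α := by gcongr; exact max_le (neg_le_abs w) (abs_nonneg w)
  rw [Vfun_eq_sub hα]
  calc |a * max w 0 ^ α - b * max (-w) 0 ^ α|
      ≤ |a| * max w 0 ^ α + |b| * max (-w) 0 ^ α := by
        refine (abs_sub _ _).trans_eq ?_
        rw [abs_mul, abs_mul, abs_of_nonneg (Real.rpow_nonneg (le_max_right _ _) _),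
          abs_of_nonneg (Real.rpow_nonneg (le_max_right _ _) _)]
    _ ≤ (|a| + |b|) * |w| ^ α := by nlinarith [abs_nonneg a, abs_nonneg b]

theorem abs_Vtfun_le (hα : 0 < α) (w : ℝ) : |Vtfun α a b w| ≤ (|a| + |b|) * |w| ^ α := by
  simpa [Vfun_neg hα] using abs_Vfun_le hα (-w)

variable {Ω : Type*} [MeasurableSpace Ω] {μ : Measure Ω} {y : Ω → ℝ}

theorem integral_Vfun_mul_of_pos (hα : 0 < α) {W : ℝ} (hW : 0 < W) (x z : ℝ) :
    ∫ ω, Vfun α a b (x * W + z * W * y ω) ∂μ = (∫ ω, Vfun α a b (x + y ω * z) ∂μ) * W ^ α := by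
  rw [← integral_mul_const]
  congr 1 with ω
  rw [show x * W + z * W * y ω = W * (x + y ω * z) by ring, Vfun_mul_of_pos hα hW, mul_comm]

theorem integral_Vfun_mul_of_neg (hα : 0 < α) {W : ℝ} (hW : W < 0) (x z : ℝ) :
    ∫ ω, Vfun α a b (x * W + z * W * y ω) ∂μ =
      (∫ ω, Vtfun α a b (x + y ω * z) ∂μ) * (-W) ^ α := by
  rw [← integral_mul_const]
  congr 1 with ω
  rw [show x * W + z * W * y ω = W * (x + y ω * z) by ring, Vfun_mul_of_neg hα hW, mul_comm]

end ValueFunction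

theorem two_period_recursion_general {Ω : Type*} [MeasurableSpace Ω] (μ : Measure Ω)
    [IsProbabilityMeasure μ] (y : Ω → ℝ) (α r A B At1 Bt1 W : ℝ)
    (hα : 0 < α) (hA : A ≤ 0) (hB : 0 < B)
    (hmeas : Measurable y) (hint : Integrable (fun ω => |y ω| ^ α) μ) :
    IsGreatest
      {u : ℝ | ∃ v : ℝ, A * |W| ≤ v ∧ v ≤ B * |W| ∧
        u = ∫ ω, Vfun α At1 Bt1 ((1 + r) * W + v * y ω) ∂μ}
      (if 0 ≤ W then
          sSup ((fun z => ∫ ω, Vfun α At1 Bt1 (1 + r + y ω * z) ∂μ) '' Icc A B) * W ^ α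
        else
          -(-sSup ((fun z => ∫ ω, Vtfun α At1 Bt1 (1 + r + y ω * z) ∂μ) '' Icc (-B) (-A))) *
            (-W) ^ α) := by
  have hAB : A ≤ B := hA.trans hB.le
  rw [setOf_exists_Icc_eq_image]
  rcases lt_trichotomy W 0 with hW | rfl | hW
  · have hI : Icc (A * |W|) (B * |W|) = (· * W) '' Icc (-B) (-A) := by
      rw [image_mul_right_Icc_of_neg (neg_le_neg hAB) hW, abs_of_neg hW]
      congr 1 <;> ring
    rw [if_neg hW.not_ge, neg_neg, hI, image_image]
    simp only [integral_Vfun_mul_of_neg hα hW]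
    exact isGreatest_image_mul_const_sSup isCompact_Icc (nonempty_Icc.2 (neg_le_neg hAB))
      (continuousOn_integral_comp_add_mul hα.le hmeas hint (continuous_Vtfun hα)
        (abs_Vtfun_le hα) _ _ _) (Real.rpow_nonneg (neg_nonneg.2 hW.le) _)
  · simp [Vfun_zero hα.ne', Real.zero_rpow hα.ne']
  · rw [if_pos hW.le, abs_of_pos hW, ← image_mul_right_Icc hAB hW.le, image_image]
    simp only [integral_Vfun_mul_of_pos hα hW]
    exact isGreatest_image_mul_const_sSup isCompact_Icc (nonempty_Icc.2 hAB)
      (continuousOn_integral_comp_add_mul hα.le hmeas hint (continuous_Vfun hα)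
        (abs_Vfun_le hα) _ _ _) (by positivity)

/-- Two-period backward recursion: given the time-(T-1) value function
`V(w) = A_{T-1} w^α 1_{w≥0} - B_{T-1}(-w)^α 1_{w<0}`, the time-(T-2) optimal value of
`E[V((1+r)W + v y)]` over admissible `v ∈ [A|W|, B|W|]` equals
`A_{T-2} W^α 1_{W≥0} - B_{T-2} (-W)^α 1_{W<0}`, where
`A_{T-2} = max_{z∈[A,B]} E[V(1+r+yz)]` and `B_{T-2} = -max_{z∈[-B,-A]} E[Ṽ(1+r+yz)]`. -/
theorem two_period_recursion {Ω : Type*} [MeasurableSpace Ω] (μ : Measure Ω)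
    [IsProbabilityMeasure μ] (y : Ω → ℝ) (α r A B At1 Bt1 W : ℝ)
    (hα : 0 < α) (hα1 : α < 1) (hr : -1 < r) (hA : A ≤ 0) (hB : 0 < B)
    (hmeas : Measurable y) (hint : Integrable (fun ω => |y ω| ^ α) μ) :
    IsGreatest
      {u : ℝ | ∃ v : ℝ, A * |W| ≤ v ∧ v ≤ B * |W| ∧
        u = ∫ ω, Vfun α At1 Bt1 ((1 + r) * W + v * y ω) ∂μ}
      (if 0 ≤ W then
          sSup ((fun z => ∫ ω, Vfun α At1 Bt1 (1 + r + y ω * z) ∂μ) '' Icc A B) * W ^ α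
        else
          -(-sSup ((fun z => ∫ ω, Vtfun α At1 Bt1 (1 + r + y ω * z) ∂μ) '' Icc (-B) (-A))) *
            (-W) ^ α) :=
  two_period_recursion_general μ y α r A B At1 Bt1 W hα hA hB hmeas hint
end
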